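/- arXiv:1304.7997 — 2 statements merged into one kernel-verified Lean document; each statement's English description precedes it below -/
import Mathlib

section
/- The Sprague-Grundy value of the odd/odd vertex removal game on a finite bipartite graph G equals 1 if G has an odd number of edges and 0 if G has an even number of edges. -/
open scoped Classical

/-- minimal excludant of a set of naturals -/
noncomputable def mexN (s : Set ℕ) : ℕ := sInf {n | n ∉ s}

/-- delete a vertex's incident edges (the vertex becomes isolated) -/
def delVert {V : Type*} (G : SimpleGraph V) (v : V) : SimpleGraph V where
  Adj a b := G.Adj a b ∧ a ≠ v ∧ b ≠ v
  symm := ⟨fun a b h => ⟨h.1.symm, h.2.2, h.2.1⟩⟩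
  loopless := ⟨fun a h => G.loopless.irrefl a h.1⟩

lemma delVert_le {V : Type*} (G : SimpleGraph V) (v : V) : delVert G v ≤ G := fun _ _ h => h.1

noncomputable def edgeCard {V : Type*} [Fintype V] (G : SimpleGraph V) : ℕ := G.edgeFinset.card

lemma edgeCard_lt {V : Type*} [Fintype V] (G : SimpleGraph V) {v : V} (h : Odd (G.degree v)) :
    edgeCard (delVert G v) < edgeCard G := by
  apply Finset.card_lt_card
  rw [Finset.ssubset_iff_of_subset (SimpleGraph.edgeFinset_subset_edgeFinset.2 (delVert_le G v))]
  obtain ⟨w, hw⟩ := (G.degree_pos_iff_exists_adj v).1 h.pos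
  refine ⟨s(v, w), ?_, ?_⟩
  · simpa [SimpleGraph.mem_edgeFinset] using hw
  · intro hc
    have := SimpleGraph.mem_edgeFinset.1 hc
    rw [SimpleGraph.mem_edgeSet] at this
    exact this.2.1 rfl

noncomputable def grundy {V : Type*} [Fintype V] (G : SimpleGraph V) : ℕ :=
  mexN {n | ∃ v : {v : V // Odd (G.degree v)}, grundy (delVert G v.1) = n}
termination_by edgeCard G
decreasing_by exact edgeCard_lt G v.2

/-! Deleting a vertex of odd degree flips the parity of the number of edges, so by induction on
the number of edges every option of a bipartite graph with an even number of edges has value 1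
and every option of one with an odd number of edges has value 0. In the odd case an option
exists: the degrees on one side of a bipartition sum to the number of edges, so one of them is
odd. -/

lemma mexN_eq_zero_of_zero_notMem {s : Set ℕ} (h : 0 ∉ s) : mexN s = 0 :=
  Nat.sInf_eq_zero.2 (Or.inl h)

lemma mexN_singleton_zero : mexN {0} = 1 := by
  have : {n | n ∉ ({0} : Set ℕ)} = Set.Ici 1 := by
    ext n
    simp [Nat.one_le_iff_ne_zero]
  rw [mexN, this, csInf_Ici]

namespace SimpleGraph

variable {V : Type*} {G : SimpleGraph V}

lemma delVert_eq_deleteIncidenceSet (G : SimpleGraph V) (v : V) :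
    delVert G v = G.deleteIncidenceSet v := by
  ext a b
  rw [deleteIncidenceSet_adj]
  rfl

lemma Colorable.delVert {n : ℕ} (hG : G.Colorable n) (v : V) : (delVert G v).Colorable n :=
  hG.mono_left (delVert_le G v)

variable [Fintype V]

lemma edgeCard_delVert_add_degree (G : SimpleGraph V) (v : V) :
    edgeCard (delVert G v) + G.degree v = edgeCard G := by
  rw [edgeCard, edgeCard, delVert_eq_deleteIncidenceSet, ← card_incidenceFinset_eq_degree]
  convert Finset.card_sdiff_add_card_eq_card (G.incidenceFinset_subset v)
  convert edgeFinset_deleteIncidenceSet_eq_sdiff G v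

lemma odd_edgeCard_delVert_iff {v : V} (hv : Odd (G.degree v)) :
    Odd (edgeCard (delVert G v)) ↔ ¬Odd (edgeCard G) := by
  rw [← edgeCard_delVert_add_degree G v, Nat.odd_add, ← Nat.not_odd_iff_even]
  tauto

lemma IsBipartite.exists_odd_degree (hG : G.IsBipartite) (h : Odd G.edgeFinset.card) :
    ∃ v, Odd (G.degree v) := by
  obtain ⟨s, t, hst⟩ := hG.exists_isBipartiteWith
  have hst' : G.IsBipartiteWith s.toFinset t.toFinset := by simpa using hst
  rw [← isBipartiteWith_sum_degrees_eq_card_edges hst'] at h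
  by_contra! hev
  exact Nat.not_even_iff_odd.2 h (Finset.even_sum _ fun v _ => Nat.not_odd_iff_even.1 (hev v))

end SimpleGraph

/-- The Grundy value of the odd/odd vertex removal game on a finite bipartite
graph `G` is 1 if `G` has an odd number of edges and 0 otherwise. -/
theorem grundy_bipartite {V : Type*} [Fintype V] (G : SimpleGraph V)
    (hb : G.Colorable 2) :
    grundy G = if Odd G.edgeFinset.card then 1 else 0 := by
  have grundy_option (v : {v : V // Odd (G.degree v)}) :
      grundy (delVert G v) = if Odd G.edgeFinset.card then 0 else 1 := by
    rw [grundy_bipartite (delVert G v) (hb.delVert v), ← edgeCard, ← edgeCard]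
    simp only [SimpleGraph.odd_edgeCard_delVert_iff v.2, ite_not]
  rw [grundy]
  split_ifs with hodd
  · obtain ⟨v, hv⟩ := SimpleGraph.IsBipartite.exists_odd_degree hb hodd
    convert mexN_singleton_zero
    ext n
    simp only [grundy_option, if_pos hodd, Set.mem_singleton_iff]
    exact ⟨fun ⟨_, hn⟩ => hn.symm, fun hn => ⟨⟨v, hv⟩, hn.symm⟩⟩
  · refine mexN_eq_zero_of_zero_notMem fun ⟨v, hzero⟩ => ?_
    simp [grundy_option, hodd] at hzero
termination_by edgeCard G
decreasing_by exact edgeCard_lt G v.2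
end

section
/- For every natural number k there exists a finite connected graph G such that the Grundy value of the odd/odd vertex removal game on G equals k. -/
/-!
Induction on `k`. Take connected graphs `H₁, …, H_{k-1}` with Grundy values `1, …, k-1`, add a
clique on `2k` new vertices, and join every odd-degree vertex of `H_j` to the `j`-th clique
vertex, leaving one clique vertex unattached. Now every old vertex has even degree and every
clique vertex odd degree, so the moves are exactly the clique vertices. Deleting the one attached
to `H_j` makes the odd vertices of `H_j` odd again and leaves every other vertex even; since
even vertices that are not adjacent to the copy of `H_j` can never become odd, this option is
worth `j`. Deleting the unattached clique vertex leaves no move at all. So the options realise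
`0, …, k-1` and the graph is worth `k`; it is connected because each `H_j`, having nonzero
value, has an odd vertex.
-/

open scoped Classical

lemma mexN_Iio (k : ℕ) : mexN (Set.Iio k) = k := by
  simp only [mexN, Set.mem_Iio, not_lt]
  exact csInf_Ici

lemma grundy_eq_mexN_image {V : Type*} [Fintype V] (G : SimpleGraph V) :
    grundy G = mexN ((fun v => grundy (delVert G v)) '' {v | Odd (G.degree v)}) := by
  rw [grundy]
  congr 1
  ext n
  simp

lemma grundy_eq_zero {V : Type*} [Fintype V] {G : SimpleGraph V}
    (h : ∀ v, Even (G.degree v)) : grundy G = 0 := by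
  rw [grundy_eq_mexN_image, ← mexN_Iio 0, Set.Iio_zero_eq_empty (α := ℕ)]
  congr 1
  simpa [Set.eq_empty_iff_forall_notMem, Nat.not_odd_iff_even] using h

lemma exists_odd_degree_of_grundy_ne_zero {V : Type*} [Fintype V] {G : SimpleGraph V}
    (h : grundy G ≠ 0) : ∃ v, Odd (G.degree v) := by
  contrapose! h
  exact grundy_eq_zero fun v => Nat.not_odd_iff_even.1 (h v)

@[simp]
lemma delVert_adj {V : Type*} (G : SimpleGraph V) (v a b : V) :
    (delVert G v).Adj a b ↔ G.Adj a b ∧ a ≠ v ∧ b ≠ v :=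
  Iff.rfl

section delVert

variable {V : Type*} [Fintype V] (G : SimpleGraph V) {u v : V}

lemma neighborFinset_delVert_of_ne (h : v ≠ u) :
    (delVert G u).neighborFinset v = (G.neighborFinset v).erase u := by
  ext w
  simp [h, and_comm]

lemma degree_delVert_self : (delVert G u).degree u = 0 := by
  simp [SimpleGraph.degree_eq_zero, SimpleGraph.IsIsolated]

lemma degree_delVert_of_adj (h : G.Adj v u) : (delVert G u).degree v = G.degree v - 1 := by
  rw [← SimpleGraph.card_neighborFinset_eq_degree, neighborFinset_delVert_of_ne G h.ne,
    Finset.card_erase_of_mem (by simpa using h), SimpleGraph.card_neighborFinset_eq_degree]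

lemma degree_delVert_of_not_adj (hne : v ≠ u) (h : ¬ G.Adj v u) :
    (delVert G u).degree v = G.degree v := by
  rw [← SimpleGraph.card_neighborFinset_eq_degree, neighborFinset_delVert_of_ne G hne,
    Finset.erase_eq_of_notMem (by simpa using h), SimpleGraph.card_neighborFinset_eq_degree]

end delVert

lemma degree_embedding_eq {V W : Type*} [Fintype V] [Fintype W] {G : SimpleGraph V}
    {H : SimpleGraph W} (f : G ↪g H) (hsep : ∀ w ∉ Set.range f, ∀ v, ¬ H.Adj w (f v))
    (v : V) :
    H.degree (f v) = G.degree v := by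
  rw [← SimpleGraph.card_neighborFinset_eq_degree, ← SimpleGraph.card_neighborFinset_eq_degree,
    ← Finset.card_map f.toEmbedding]
  congr 1
  ext w
  by_cases hw : w ∈ Set.range f
  · obtain ⟨w, rfl⟩ := hw
    simp
  · rw [SimpleGraph.mem_neighborFinset, Finset.mem_map]
    refine iff_of_false (fun h => hsep w hw v h.symm) ?_
    rintro ⟨a, -, rfl⟩
    exact hw ⟨a, rfl⟩

theorem grundy_eq_of_embedding {V W : Type*} [Fintype V] [Fintype W] {G : SimpleGraph V}
    {H : SimpleGraph W} (f : G ↪g H) (heven : ∀ w ∉ Set.range f, Even (H.degree w))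
    (hsep : ∀ w ∉ Set.range f, ∀ v, ¬ H.Adj w (f v)) : grundy H = grundy G := by
  have hdeg := degree_embedding_eq f hsep
  have hodd : {w | Odd (H.degree w)} = f '' {v | Odd (G.degree v)} := by
    ext w
    by_cases hw : w ∈ Set.range f
    · obtain ⟨v, rfl⟩ := hw
      simp [hdeg]
    · have : ∀ v, f v ≠ w := fun v hv => hw ⟨v, hv⟩
      simpa [this, Nat.not_odd_iff_even] using heven w hw
  have hoption : ∀ v ∈ {v | Odd (G.degree v)},
      grundy (delVert H (f v)) = grundy (delVert G v) := by
    intro v hv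
    let f' : delVert G v ↪g delVert H (f v) :=
      ⟨f.toEmbedding, by simp [f.injective.ne_iff]⟩
    refine grundy_eq_of_embedding f' (fun w hw => ?_) (fun w hw a h => hsep w hw a h.1)
    change w ∉ Set.range f at hw
    rw [degree_delVert_of_not_adj H (fun h => hw ⟨v, h.symm⟩) (hsep w hw v)]
    exact heven w hw
  rw [grundy_eq_mexN_image, grundy_eq_mexN_image, hodd, Set.image_image]
  exact congrArg mexN (Set.image_congr hoption)
termination_by edgeCard G
decreasing_by exact edgeCard_lt G hv

lemma grundy_eq_of_iso {V W : Type*} [Fintype V] [Fintype W] {G : SimpleGraph V}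
    {H : SimpleGraph W} (e : G ≃g H) : grundy H = grundy G :=
  grundy_eq_of_embedding e.toEmbedding (fun w hw => absurd (e.surjective w) hw)
    (fun w hw => absurd (e.surjective w) hw)

section AttachClique

variable {ι T : Type*} {V : ι → Type*} [∀ i, Fintype (V i)] (H : ∀ i, SimpleGraph (V i))
  (τ : ι → T)

def attachClique : SimpleGraph ((Σ i, V i) ⊕ T) where
  Adj
    | .inl x, .inl y => ∃ i v w, (H i).Adj v w ∧ x = ⟨i, v⟩ ∧ y = ⟨i, w⟩
    | .inl ⟨i, v⟩, .inr t | .inr t, .inl ⟨i, v⟩ => τ i = t ∧ Odd ((H i).degree v)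
    | .inr s, .inr t => s ≠ t
  symm := by
    constructor
    rintro (x | s) (y | t) h
    · obtain ⟨i, v, w, h, rfl, rfl⟩ := h
      exact ⟨i, w, v, h.symm, rfl, rfl⟩
    · exact h
    · exact h
    · exact h.symm
  loopless := by
    constructor
    rintro (x | s) h
    · obtain ⟨i, v, w, h, rfl, hw⟩ := h
      cases hw
      exact (H i).loopless.irrefl v h
    · exact h rfl

variable {H τ}

@[simp]
lemma attachClique_adj_inl_mk_inl_mk {i : ι} {v w : V i} :
    (attachClique H τ).Adj (.inl ⟨i, v⟩) (.inl ⟨i, w⟩) ↔ (H i).Adj v w := by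
  constructor
  · rintro ⟨j, v', w', h, hv, hw⟩
    cases hv
    cases hw
    exact h
  · exact fun h => ⟨i, v, w, h, rfl, rfl⟩

lemma fst_eq_of_attachClique_adj_inl_inl {x y : Σ i, V i}
    (h : (attachClique H τ).Adj (.inl x) (.inl y)) : x.1 = y.1 := by
  obtain ⟨i, v, w, -, rfl, rfl⟩ := h
  rfl

@[simp]
lemma attachClique_adj_inl_inr {i : ι} {v : V i} {t : T} :
    (attachClique H τ).Adj (.inl ⟨i, v⟩) (.inr t) ↔ τ i = t ∧ Odd ((H i).degree v) :=
  Iff.rfl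

@[simp]
lemma attachClique_adj_inr_inl {i : ι} {v : V i} {t : T} :
    (attachClique H τ).Adj (.inr t) (.inl ⟨i, v⟩) ↔ τ i = t ∧ Odd ((H i).degree v) :=
  Iff.rfl

@[simp]
lemma attachClique_adj_inr_inr {s t : T} : (attachClique H τ).Adj (.inr s) (.inr t) ↔ s ≠ t :=
  Iff.rfl

def attachClique.copy (i : ι) (s : T) : H i ↪g delVert (attachClique H τ) (.inr s) where
  toFun v := .inl ⟨i, v⟩
  inj' _ _ h := by simpa using h
  map_rel_iff' {v w} := by
    change (delVert (attachClique H τ) _).Adj (.inl ⟨i, v⟩) (.inl ⟨i, w⟩) ↔ _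
    simp

theorem connected_attachClique [Nonempty T] (hH : ∀ i, (H i).Connected)
    (hodd : ∀ i, ∃ v, Odd ((H i).degree v)) : (attachClique H τ).Connected := by
  have hinr : ∀ s t : T, (attachClique H τ).Reachable (.inr s) (.inr t) := by
    intro s t
    by_cases hst : s = t
    · rw [hst]
    · exact (attachClique_adj_inr_inr.2 hst).reachable
  obtain ⟨t₀⟩ := ‹Nonempty T›
  refine (SimpleGraph.connected_iff_exists_forall_reachable _).2 ⟨.inr t₀, ?_⟩
  rintro (⟨i, v⟩ | t)
  · obtain ⟨w, hw⟩ := hodd i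
    have hwv : (attachClique H τ).Reachable (.inl ⟨i, w⟩) (.inl ⟨i, v⟩) :=
      (((hH i).preconnected w v).map (attachClique.copy i t₀).toHom).mono (delVert_le _ _)
    exact (hinr t₀ (τ i)).trans ((attachClique_adj_inr_inl.2 ⟨rfl, hw⟩).reachable.trans hwv)
  · exact hinr t₀ t

variable [Fintype ι] [Fintype T]

lemma neighborFinset_attachClique_inl (i : ι) (v : V i) :
    (attachClique H τ).neighborFinset (.inl ⟨i, v⟩) =
      (((H i).neighborFinset v).map (Function.Embedding.sigmaMk i)).disjSum
        (if Odd ((H i).degree v) then {τ i} else ∅) := by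
  ext (⟨j, w⟩ | t)
  · rw [SimpleGraph.mem_neighborFinset, Finset.inl_mem_disjSum, Finset.mem_map]
    by_cases hij : i = j
    · subst hij
      simp
    · refine iff_of_false (fun h => hij (fst_eq_of_attachClique_adj_inl_inl h)) ?_
      rintro ⟨w, -, h⟩
      exact hij (congrArg Sigma.fst h)
  · split_ifs with hodd <;> simp [hodd, eq_comm]

lemma even_degree_attachClique_inl (x : Σ i, V i) :
    Even ((attachClique H τ).degree (.inl x)) := by
  obtain ⟨i, v⟩ := x
  rw [← SimpleGraph.card_neighborFinset_eq_degree, neighborFinset_attachClique_inl,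
    Finset.card_disjSum, Finset.card_map, SimpleGraph.card_neighborFinset_eq_degree]
  split_ifs with hodd
  · exact hodd.add_one
  · simpa using hodd

lemma neighborFinset_attachClique_inr (t : T) :
    (attachClique H τ).neighborFinset (.inr t) =
      ((Finset.univ.filter (τ · = t)).sigma
        fun i => Finset.univ.filter fun v => Odd ((H i).degree v)).disjSum
        (Finset.univ.erase t) := by
  ext (⟨i, v⟩ | s) <;> simp [eq_comm]

lemma odd_degree_attachClique_inr (hT : Even (Fintype.card T)) (t : T) :
    Odd ((attachClique H τ).degree (.inr t)) := by
  rw [← SimpleGraph.card_neighborFinset_eq_degree, neighborFinset_attachClique_inr,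
    Finset.card_disjSum, Finset.card_sigma, Finset.card_erase_of_mem (Finset.mem_univ t),
    Finset.card_univ]
  refine Even.add_odd (Finset.even_sum _ fun i _ => (H i).even_card_odd_degree_vertices) ?_
  exact Nat.Even.sub_odd (Fintype.card_pos_iff.2 ⟨t⟩) hT odd_one

lemma even_degree_delVert_attachClique_inr (hT : Even (Fintype.card T)) {s : T}
    {u : (Σ i, V i) ⊕ T} (hu : ∀ x, u = .inl x → τ x.1 ≠ s) :
    Even ((delVert (attachClique H τ) (.inr s)).degree u) := by
  rcases u with ⟨i, v⟩ | t
  · have hnadj : ¬ (attachClique H τ).Adj (.inl ⟨i, v⟩) (.inr s) :=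
      fun h => hu _ rfl (attachClique_adj_inl_inr.1 h).1
    rw [degree_delVert_of_not_adj _ Sum.inl_ne_inr hnadj]
    exact even_degree_attachClique_inl _
  · by_cases hts : t = s
    · rw [hts, degree_delVert_self]
      exact Even.zero
    · rw [degree_delVert_of_adj _ (attachClique_adj_inr_inr.2 hts)]
      exact Nat.Odd.sub_odd (odd_degree_attachClique_inr hT t) odd_one

lemma grundy_delVert_attachClique_of_notMem_range (hT : Even (Fintype.card T)) {s : T}
    (hs : s ∉ Set.range τ) : grundy (delVert (attachClique H τ) (.inr s)) = 0 :=
  grundy_eq_zero fun _ => even_degree_delVert_attachClique_inr hT fun x _ h => hs ⟨x.1, h⟩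

lemma grundy_delVert_attachClique_apply (hT : Even (Fintype.card T)) (hτ : τ.Injective)
    (i : ι) : grundy (delVert (attachClique H τ) (.inr (τ i))) = grundy (H i) := by
  refine grundy_eq_of_embedding (attachClique.copy i (τ i))
    (fun u hu => even_degree_delVert_attachClique_inr hT ?_) ?_
  · rintro ⟨j, v⟩ rfl hj
    obtain rfl := hτ hj
    exact hu ⟨v, rfl⟩
  · rintro (⟨j, w⟩ | t) hu v h
    · obtain rfl : j = i := fst_eq_of_attachClique_adj_inl_inl h.1
      exact hu ⟨w, rfl⟩
    · exact h.2.1 (congrArg Sum.inr (attachClique_adj_inr_inl.1 h.1).1.symm)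

theorem grundy_attachClique (hT : Even (Fintype.card T)) (hτ : τ.Injective)
    (hτs : ¬ τ.Surjective) :
    grundy (attachClique H τ) = mexN (insert 0 (Set.range fun i => grundy (H i))) := by
  rw [grundy_eq_mexN_image]
  congr 1
  ext n
  constructor
  · rintro ⟨x | t, hodd, rfl⟩
    · exact absurd (even_degree_attachClique_inl x) (Nat.not_even_iff_odd.2 hodd)
    · by_cases ht : t ∈ Set.range τ
      · obtain ⟨i, rfl⟩ := ht
        exact Or.inr ⟨i, (grundy_delVert_attachClique_apply hT hτ i).symm⟩
      · exact Or.inl (grundy_delVert_attachClique_of_notMem_range hT ht)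
  · rintro (rfl | ⟨i, rfl⟩)
    · obtain ⟨s, hs⟩ := not_forall.1 hτs
      exact ⟨.inr s, odd_degree_attachClique_inr hT s,
        grundy_delVert_attachClique_of_notMem_range hT fun ⟨i, hi⟩ => hs ⟨i, hi⟩⟩
    · exact ⟨.inr (τ i), odd_degree_attachClique_inr hT _,
        grundy_delVert_attachClique_apply hT hτ i⟩

end AttachClique

lemma insert_zero_range_succ (c : ℕ) :
    insert 0 (Set.range fun i : Fin c => (i : ℕ) + 1) = Set.Iio (c + 1) := by
  ext (_ | j)
  · simp
  · simp only [Set.mem_insert_iff, Set.mem_range, Set.mem_Iio]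
    constructor
    · rintro (h | ⟨i, hi⟩) <;> omega
    · exact fun hj => Or.inr ⟨⟨j, by omega⟩, rfl⟩

/-- For every natural number `k` there is a finite connected graph whose
odd/odd vertex removal game has Grundy value `k`. -/
theorem exists_connected_graph_with_grundy (k : ℕ) :
    ∃ (n : ℕ) (G : SimpleGraph (Fin n)), G.Connected ∧ grundy G = k := by
  induction k using Nat.strong_induction_on with
  | _ k ih =>
  rcases k with _ | c
  · refine ⟨1, ⊥, SimpleGraph.connected_bot_iff.2 ⟨inferInstance, inferInstance⟩, ?_⟩
    exact grundy_eq_zero fun v => by simp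
  choose n H hconn hgrundy using fun i : Fin c => ih (i + 1) (by omega)
  let τ : Fin c → Bool × Option (Fin c) := fun i => (true, some i)
  have hT : Even (Fintype.card (Bool × Option (Fin c))) := by simp
  have hτ : τ.Injective := fun i j h => by simpa [τ] using h
  have hτs : ¬ τ.Surjective := fun h => by simpa [τ] using h (false, none)
  have hodd i : ∃ v, Odd ((H i).degree v) :=
    exists_odd_degree_of_grundy_ne_zero (by rw [hgrundy]; omega)
  let G := attachClique H τ
  have hG : grundy G = c + 1 := by
    rw [grundy_attachClique hT hτ hτs, funext hgrundy, insert_zero_range_succ, mexN_Iio]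
  refine ⟨_, G.overFin rfl, (G.overFinIso rfl).connected_iff.1 ?_, ?_⟩
  · exact connected_attachClique hconn hodd
  · rw [grundy_eq_of_iso (G.overFinIso rfl), hG]
end
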